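/- arXiv:2101.07435 — 4 statements merged into one kernel-verified Lean document; each statement's English description precedes it below -/
import Mathlib

section
/- If every agent's cost function is monotone and subadditive, then every allocation of E among the n agents is 2-PMMS and n-MMS. -/
open Finset

/-- `T` is a `k`-partition of the bundle `S`: pairwise disjoint bundles whose union is `S`. -/
def IsPartitionOf {E : Type*} [DecidableEq E] {k : ℕ} (T : Fin k → Finset E) (S : Finset E) :
    Prop :=
  (∀ i j : Fin k, i ≠ j → Disjoint (T i) (T j)) ∧ Finset.univ.biUnion T = S

/-- The maximin share of cost function `c` on `S` among `k` agents:
the minimum over `k`-partitions of `S` of the maximum cost of a bundle. -/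
noncomputable def MMS {E : Type*} [DecidableEq E] (c : Finset E → ℝ) (k : ℕ) (S : Finset E) :
    ℝ :=
  sInf { m : ℝ | ∃ T : Fin k → Finset E, IsPartitionOf T S ∧ m = ⨆ j : Fin k, c (T j) }

/-- `c` is a nonnegative additive cost function. -/
def AdditiveCost {E : Type*} [DecidableEq E] (c : Finset E → ℝ) : Prop :=
  (∀ S : Finset E, 0 ≤ c S) ∧ ∀ S : Finset E, c S = ∑ e ∈ S, c {e}

/-- `c` is a nonnegative monotone cost function with `c ∅ = 0`. -/
def MonotoneCost {E : Type*} (c : Finset E → ℝ) : Prop :=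
  (∀ S : Finset E, 0 ≤ c S) ∧ c ∅ = 0 ∧ ∀ ⦃S T : Finset E⦄, S ⊆ T → c S ≤ c T

/-- `c` is subadditive. -/
def SubadditiveCost {E : Type*} [DecidableEq E] (c : Finset E → ℝ) : Prop :=
  ∀ S T : Finset E, c (S ∪ T) ≤ c S + c T

/-- `c` is submodular. -/
def SubmodularCost {E : Type*} [DecidableEq E] (c : Finset E → ℝ) : Prop :=
  ∀ S T : Finset E, c (S ∪ T) + c (S ∩ T) ≤ c S + c T

/-- `A` is an allocation of all chores among the `n` agents. -/
def IsAllocation {E : Type*} [DecidableEq E] [Fintype E] {n : ℕ} (A : Fin n → Finset E) : Prop :=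
  IsPartitionOf A Finset.univ

/-- `A` is `α`-envy-free. -/
def IsEF {E : Type*} {n : ℕ} (α : ℝ) (c : Fin n → Finset E → ℝ) (A : Fin n → Finset E) : Prop :=
  ∀ i j, c i (A i) ≤ α * c i (A j)

/-- `A` is `α`-envy-free up to one item. -/
def IsEF1 {E : Type*} [DecidableEq E] {n : ℕ} (α : ℝ) (c : Fin n → Finset E → ℝ)
    (A : Fin n → Finset E) : Prop :=
  ∀ i j, i ≠ j → A i = ∅ ∨ ∃ e ∈ A i, c i (A i \ {e}) ≤ α * c i (A j)

/-- `A` is `α`-envy-free up to any (positive-cost) item. -/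
def IsEFX {E : Type*} [DecidableEq E] {n : ℕ} (α : ℝ) (c : Fin n → Finset E → ℝ)
    (A : Fin n → Finset E) : Prop :=
  ∀ i j, i ≠ j → ∀ e ∈ A i, 0 < c i {e} → c i (A i \ {e}) ≤ α * c i (A j)

/-- `A` is an `α`-MMS allocation. -/
def IsMMSFair {E : Type*} [DecidableEq E] [Fintype E] {n : ℕ} (α : ℝ)
    (c : Fin n → Finset E → ℝ) (A : Fin n → Finset E) : Prop :=
  ∀ i, c i (A i) ≤ α * MMS (c i) n Finset.univ

/-- `A` is an `α`-PMMS allocation. -/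
def IsPMMS {E : Type*} [DecidableEq E] {n : ℕ} (α : ℝ)
    (c : Fin n → Finset E → ℝ) (A : Fin n → Finset E) : Prop :=
  ∀ i j, i ≠ j → c i (A i) ≤ α * MMS (c i) 2 (A i ∪ A j)

/-- The optimal (minimum) social cost over all allocations. -/
noncomputable def OPT {E : Type*} [DecidableEq E] [Fintype E] {n : ℕ}
    (c : Fin n → Finset E → ℝ) : ℝ :=
  sInf { s : ℝ | ∃ A : Fin n → Finset E, IsAllocation A ∧ s = ∑ i, c i (A i) }

/-!
By subadditivity, the cost of a bundle is at most the total cost of the `k` parts of any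
`k`-partition of it, hence at most `k` times the cost of the worst part: `c S ≤ k · MMS(k, S)`.
By monotonicity, `c (A i) ≤ c (A i ∪ A j) ≤ 2 · MMS(2, A i ∪ A j)` and
`c (A i) ≤ c E ≤ n · MMS(n, E)`.
-/

section

variable {E : Type*} [DecidableEq E]

lemma isPartitionOf_update_empty {k : ℕ} (i : Fin k) (S : Finset E) :
    IsPartitionOf (Function.update (fun _ => ∅) i S) S := by
  refine ⟨fun j l hjl => ?_, ?_⟩
  · rcases eq_or_ne j i with rfl | hj
    · simp [Function.update_of_ne hjl.symm]
    · simp [Function.update_of_ne hj]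
  · ext x
    simp only [mem_biUnion, mem_univ, true_and]
    refine ⟨fun ⟨j, hx⟩ => ?_, fun hx => ⟨i, by simpa using hx⟩⟩
    rcases eq_or_ne j i with rfl | hj
    · simpa using hx
    · simp [Function.update_of_ne hj] at hx

variable {c : Finset E → ℝ}

lemma SubadditiveCost.le_card_mul_iSup (hs : SubadditiveCost c) (h0 : c ∅ = 0) {k : ℕ}
    {T : Fin k → Finset E} {S : Finset E} (hT : IsPartitionOf T S) :
    c S ≤ k * ⨆ j, c (T j) :=
  calc c S = c (univ.sup T) := by rw [sup_eq_biUnion, hT.2]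
    _ ≤ ∑ j, c (T j) := apply_sup_le_sum h0 (hs _ _) univ
    _ ≤ ∑ _j : Fin k, ⨆ j, c (T j) :=
        sum_le_sum fun j _ => le_ciSup (Set.finite_range fun j => c (T j)).bddAbove j
    _ = k * ⨆ j, c (T j) := by simp

lemma SubadditiveCost.le_mul_MMS (hs : SubadditiveCost c) (h0 : c ∅ = 0) {k : ℕ} (hk : 0 < k)
    (S : Finset E) : c S ≤ k * MMS c k S := by
  have hne : { m : ℝ | ∃ T : Fin k → Finset E, IsPartitionOf T S ∧ m = ⨆ j, c (T j) }.Nonempty :=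
    ⟨_, _, isPartitionOf_update_empty ⟨0, hk⟩ S, rfl⟩
  rw [← div_le_iff₀' (by positivity)]
  refine le_csInf hne ?_
  rintro _ ⟨T, hT, rfl⟩
  rw [div_le_iff₀' (by positivity)]
  exact hs.le_card_mul_iSup h0 hT

end

theorem any_allocation_is_two_PMMS_and_n_MMS_general {E : Type*} [DecidableEq E] [Fintype E]
    {n : ℕ} (c : Fin n → Finset E → ℝ)
    (hmono : ∀ i, MonotoneCost (c i)) (hsub : ∀ i, SubadditiveCost (c i))
    (A : Fin n → Finset E) :
    IsPMMS 2 c A ∧ IsMMSFair (n : ℝ) c A := by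
  refine ⟨fun i j _ => ?_, fun i => ?_⟩
  · calc c i (A i) ≤ c i (A i ∪ A j) := (hmono i).2.2 subset_union_left
      _ ≤ 2 * MMS (c i) 2 (A i ∪ A j) := by
        exact_mod_cast (hsub i).le_mul_MMS (hmono i).2.1 two_pos _
  · calc c i (A i) ≤ c i univ := (hmono i).2.2 (subset_univ _)
      _ ≤ n * MMS (c i) n univ := (hsub i).le_mul_MMS (hmono i).2.1 i.pos _

/-- Lemma 3.2: with monotone subadditive cost functions, any allocation is
2-PMMS and `n`-MMS. -/
theorem any_allocation_is_two_PMMS_and_n_MMS {E : Type*} [DecidableEq E] [Fintype E]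
    {n : ℕ} (hn : 2 ≤ n) (c : Fin n → Finset E → ℝ)
    (hmono : ∀ i, MonotoneCost (c i)) (hsub : ∀ i, SubadditiveCost (c i))
    (A : Fin n → Finset E) (hA : IsAllocation A) :
    IsPMMS 2 c A ∧ IsMMSFair (n : ℝ) c A :=
  any_allocation_is_two_PMMS_and_n_MMS_general c hmono hsub A
end

section
/- Assume all agents have additive cost functions and let α ≥ 1. Every α-EF allocation is (nα/(n−1+α))-MMS. Moreover this bound is tight: for every n ≥ 2 and α ≥ 1 there exists an n-agent instance with additive cost functions, an α-EF allocation A, and an agent i with c_i(A_i) = (nα/(n−1+α))·MMS_i(n,E). -/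
open Finset

lemma partition_sum' {E : Type*} [DecidableEq E] {k : ℕ} {T : Fin k → Finset E} {S : Finset E}
    (hT : IsPartitionOf T S) {c : Finset E → ℝ} (hc : AdditiveCost c) :
    ∑ j, c (T j) = c S := by
  rw [hc.2 S, ← hT.2, Finset.sum_biUnion (fun i _ j _ hij => hT.1 i j hij)]
  exact Finset.sum_congr rfl fun j _ => hc.2 (T j)

lemma avg_le_sup' {k : ℕ} (hk : 0 < k) (f : Fin k → ℝ) :
    (∑ j, f j) / k ≤ ⨆ j, f j := by
  have : Nonempty (Fin k) := ⟨⟨0, hk⟩⟩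
  have h2 : ∑ j, f j ≤ ∑ _j : Fin k, ⨆ j, f j :=
    Finset.sum_le_sum fun j _ => le_ciSup (Set.Finite.bddAbove (Set.finite_range f)) j
  rw [Finset.sum_const, Finset.card_univ, Fintype.card_fin, nsmul_eq_mul] at h2
  rw [div_le_iff₀ (by exact_mod_cast hk)]
  linarith

lemma mms_ge' {E : Type*} [DecidableEq E] {k : ℕ} (hk : 0 < k) {c : Finset E → ℝ}
    (hc : AdditiveCost c) (S : Finset E) : c S / k ≤ MMS c k S := by
  apply le_csInf
  · refine ⟨_, fun j => if j = ⟨0, hk⟩ then S else ∅, ⟨?_, ?_⟩, rfl⟩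
    · intro i j hij
      by_cases hi : i = ⟨0, hk⟩ <;> by_cases hj : j = ⟨0, hk⟩ <;> simp_all
    · ext x
      simp only [Finset.mem_biUnion, Finset.mem_univ, true_and]
      constructor
      · rintro ⟨j, hj⟩
        by_cases h : j = ⟨0, hk⟩ <;> simp_all
      · intro hx
        exact ⟨⟨0, hk⟩, by simpa using hx⟩
  · rintro m ⟨T, hT, rfl⟩
    rw [← partition_sum' hT hc]
    exact avg_le_sup' hk _

lemma mms_le' {E : Type*} [DecidableEq E] {k : ℕ} (hk : 0 < k) {c : Finset E → ℝ}
    (hc0 : ∀ S, 0 ≤ c S) {T : Fin k → Finset E} {S : Finset E} (hT : IsPartitionOf T S) :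
    MMS c k S ≤ ⨆ j, c (T j) := by
  have hbdd : BddBelow { m : ℝ | ∃ T : Fin k → Finset E,
      IsPartitionOf T S ∧ m = ⨆ j : Fin k, c (T j) } := by
    refine ⟨0, ?_⟩
    rintro m ⟨T', _, rfl⟩
    have : Nonempty (Fin k) := ⟨⟨0, hk⟩⟩
    exact le_trans (hc0 (T' ⟨0, hk⟩))
      (le_ciSup (f := fun j => c (T' j)) (Set.Finite.bddAbove (Set.finite_range _)) ⟨0, hk⟩)
  exact csInf_le hbdd ⟨T, hT, rfl⟩

/-- Proposition 4.1: with additive cost functions, every `α`-EF allocation is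
`nα/(n-1+α)`-MMS, and this bound is tight. -/
theorem alphaEF_is_MMS_and_tight :
    (∀ (E : Type) [DecidableEq E] [Fintype E] (n : ℕ), 2 ≤ n → ∀ α : ℝ, 1 ≤ α →
      ∀ c : Fin n → Finset E → ℝ, (∀ i, AdditiveCost (c i)) →
      ∀ A : Fin n → Finset E, IsAllocation A → IsEF α c A →
        IsMMSFair ((n : ℝ) * α / ((n : ℝ) - 1 + α)) c A) ∧
    (∀ n : ℕ, 2 ≤ n → ∀ α : ℝ, 1 ≤ α →
      ∃ (m : ℕ) (c : Fin n → Finset (Fin m) → ℝ) (A : Fin n → Finset (Fin m)),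
        (∀ i, AdditiveCost (c i)) ∧ IsAllocation A ∧ IsEF α c A ∧
        ∃ i, c i (A i) = ((n : ℝ) * α / ((n : ℝ) - 1 + α)) * MMS (c i) n Finset.univ) := by
  constructor
  · intro E _ _ n hn α hα c hc A hA hEF i
    have hn0 : 0 < n := by omega
    have hnR : (2:ℝ) ≤ (n:ℝ) := by exact_mod_cast hn
    have hα0 : (0:ℝ) < α := lt_of_lt_of_le one_pos hα
    set C := c i Finset.univ with hC
    have hsum : ∑ j, c i (A j) = C := partition_sum' hA (hc i)
    have hnonneg : ∀ S, 0 ≤ c i S := (hc i).1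
    have hsplit : c i (A i) + ∑ j ∈ Finset.univ.erase i, c i (A j) = C := by
      rw [← hsum]
      exact Finset.add_sum_erase _ (fun j => c i (A j)) (Finset.mem_univ i)
    have hrest : ((n:ℝ) - 1) * c i (A i) ≤ α * ∑ j ∈ Finset.univ.erase i, c i (A j) := by
      have h1 : ∑ _j ∈ Finset.univ.erase i, c i (A i)
          ≤ ∑ j ∈ Finset.univ.erase i, α * c i (A j) :=
        Finset.sum_le_sum fun j _ => hEF i j
      rw [Finset.sum_const, Finset.card_erase_of_mem (Finset.mem_univ i),
        Finset.card_univ, Fintype.card_fin, nsmul_eq_mul, ← Finset.mul_sum] at h1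
      have hcast : ((n - 1 : ℕ) : ℝ) = (n:ℝ) - 1 := by
        rw [Nat.cast_sub (by omega), Nat.cast_one]
      rw [hcast] at h1
      exact h1
    have key : ((n:ℝ) - 1 + α) * c i (A i) ≤ α * C := by nlinarith [hsplit, hrest]
    have hM : C / n ≤ MMS (c i) n Finset.univ := mms_ge' hn0 (hc i) _
    have hd : (0:ℝ) < (n:ℝ) - 1 + α := by linarith
    have hcoef : 0 ≤ (n:ℝ) * α / ((n:ℝ) - 1 + α) := by positivity
    calc c i (A i) ≤ ((n:ℝ) * α / ((n:ℝ) - 1 + α)) * (C / n) := by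
          have heq : ((n:ℝ) * α / ((n:ℝ) - 1 + α)) * (C / n) = α * C / ((n:ℝ) - 1 + α) := by
            field_simp
          rw [heq, le_div_iff₀ hd]
          linarith [key]
      _ ≤ _ := mul_le_mul_of_nonneg_left hM hcoef
  · intro n hn α hα
    have hn0 : 0 < n := by omega
    haveI : NeZero n := ⟨by omega⟩
    haveI : Nonempty (Fin n) := ⟨0⟩
    have hnR : (2:ℝ) ≤ (n:ℝ) := by exact_mod_cast hn
    have hnne : (n:ℝ) ≠ 0 := by positivity
    have hα0 : (0:ℝ) < α := by linarith
    set w : Fin (n*n) → ℝ := fun e => if (e:ℕ) < n then α/n else 1/n with hw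
    have hw0 : ∀ e, 0 ≤ w e := by
      intro e; rw [hw]; dsimp only; split <;> positivity
    set c : Finset (Fin (n*n)) → ℝ := fun S => ∑ e ∈ S, w e with hcdef
    have hadd : AdditiveCost c := by
      refine ⟨fun S => Finset.sum_nonneg fun e _ => hw0 e, fun S => ?_⟩
      simp [hcdef]
    have hlt : ∀ (q r : Fin n), n * (q:ℕ) + (r:ℕ) < n * n := by
      intro q r
      calc n * (q:ℕ) + (r:ℕ) < n * (q:ℕ) + n := by omega
        _ = n * ((q:ℕ) + 1) := by ring
        _ ≤ n * n := Nat.mul_le_mul_left _ (by omega)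
    set g : Fin n → Fin n → Fin (n*n) := fun q r => ⟨n * (q:ℕ) + (r:ℕ), hlt q r⟩ with hg
    have hdiv : ∀ q r : Fin n, ((g q r : ℕ)) / n = q := by
      intro q r
      show (n * (q:ℕ) + (r:ℕ)) / n = q
      rw [Nat.mul_add_div hn0, Nat.div_eq_of_lt r.2, add_zero]
    have hmod : ∀ q r : Fin n, ((g q r : ℕ)) % n = r := by
      intro q r
      show (n * (q:ℕ) + (r:ℕ)) % n = r
      rw [Nat.mul_add_mod, Nat.mod_eq_of_lt r.2]
    set A : Fin n → Finset (Fin (n*n)) := fun j => Finset.univ.image (g j) with hAdef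
    set T : Fin n → Finset (Fin (n*n)) := fun j => Finset.univ.image (fun q => g q j) with hTdef
    have hmemA : ∀ (j : Fin n) (x : Fin (n*n)), x ∈ A j ↔ ∃ r, g j r = x := by
      intro j x; simp [hAdef]
    have hmemT : ∀ (j : Fin n) (x : Fin (n*n)), x ∈ T j ↔ ∃ q, g q j = x := by
      intro j x; simp [hTdef]
    have hApart : IsAllocation A := by
      constructor
      · intro i j hij
        rw [Finset.disjoint_left]
        intro x hxi hxj
        obtain ⟨r, hr⟩ := (hmemA i x).1 hxi
        obtain ⟨r', hr'⟩ := (hmemA j x).1 hxj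
        apply hij
        apply Fin.ext
        rw [← hdiv i r, ← hdiv j r', hr, hr']
      · ext x
        simp only [Finset.mem_biUnion, Finset.mem_univ, iff_true, true_and]
        refine ⟨⟨(x:ℕ)/n, (Nat.div_lt_iff_lt_mul hn0).2 x.2⟩, ?_⟩
        rw [hmemA]
        refine ⟨⟨(x:ℕ) % n, Nat.mod_lt _ hn0⟩, ?_⟩
        apply Fin.ext
        show n * ((x:ℕ)/n) + (x:ℕ) % n = (x:ℕ)
        exact Nat.div_add_mod _ _
    have hTpart : IsPartitionOf T Finset.univ := by
      constructor
      · intro i j hij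
        rw [Finset.disjoint_left]
        intro x hxi hxj
        obtain ⟨q, hq⟩ := (hmemT i x).1 hxi
        obtain ⟨q', hq'⟩ := (hmemT j x).1 hxj
        apply hij
        apply Fin.ext
        rw [← hmod q i, ← hmod q' j, hq, hq']
      · ext x
        simp only [Finset.mem_biUnion, Finset.mem_univ, iff_true, true_and]
        refine ⟨⟨(x:ℕ) % n, Nat.mod_lt _ hn0⟩, ?_⟩
        rw [hmemT]
        refine ⟨⟨(x:ℕ)/n, (Nat.div_lt_iff_lt_mul hn0).2 x.2⟩, ?_⟩
        apply Fin.ext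
        show n * ((x:ℕ)/n) + (x:ℕ) % n = (x:ℕ)
        exact Nat.div_add_mod _ _
    have hwg : ∀ q r : Fin n, w (g q r) = if (q:ℕ) = 0 then α/n else 1/n := by
      intro q r
      show (if (g q r : ℕ) < n then α/n else 1/n) = _
      by_cases hq : (q:ℕ) = 0
      · rw [if_pos hq, if_pos]
        show n * (q:ℕ) + (r:ℕ) < n
        rw [hq]; simpa using r.2
      · rw [if_neg, if_neg hq]
        show ¬ (n * (q:ℕ) + (r:ℕ) < n)
        have : n ≤ n * (q:ℕ) := Nat.le_mul_of_pos_right n (Nat.pos_of_ne_zero hq)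
        omega
    have hginj : ∀ j : Fin n, ∀ r ∈ (Finset.univ : Finset (Fin n)), ∀ r' ∈ Finset.univ,
        g j r = g j r' → r = r' := by
      intro j r _ r' _ h
      apply Fin.ext
      rw [← hmod j r, ← hmod j r', h]
    have hginj' : ∀ j : Fin n, ∀ q ∈ (Finset.univ : Finset (Fin n)), ∀ q' ∈ Finset.univ,
        g q j = g q' j → q = q' := by
      intro j q _ q' _ h
      apply Fin.ext
      rw [← hdiv q j, ← hdiv q' j, h]
    have hcA : ∀ j : Fin n, c (A j) = ∑ r : Fin n, w (g j r) :=
      fun j => Finset.sum_image (hginj j)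
    have hcT : ∀ j : Fin n, c (T j) = ∑ q : Fin n, w (g q j) :=
      fun j => Finset.sum_image (hginj' j)
    have hcA0 : c (A 0) = α := by
      rw [hcA 0, Finset.sum_congr rfl (fun r _ => by
        rw [hwg 0 r, if_pos (by simp)]),
        Finset.sum_const, Finset.card_univ, Fintype.card_fin, nsmul_eq_mul]
      field_simp
    have hcAj : ∀ j : Fin n, j ≠ 0 → c (A j) = 1 := by
      intro j hj
      have hj' : (j:ℕ) ≠ 0 := fun h => hj (Fin.ext (by simpa using h))
      rw [hcA j, Finset.sum_congr rfl (fun r _ => by rw [hwg j r, if_neg hj']),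
        Finset.sum_const, Finset.card_univ, Fintype.card_fin, nsmul_eq_mul]
      field_simp
    have hcTval : ∀ j : Fin n, c (T j) = (α + ((n:ℝ) - 1)) / n := by
      intro j
      rw [hcT j, Finset.sum_congr rfl (fun q _ => hwg q j)]
      have hsplit : ∀ q : Fin n, (if (q:ℕ) = 0 then α/n else 1/n)
          = (if q = 0 then α/n - 1/n else 0) + 1/n := by
        intro q
        by_cases hq : q = 0
        · rw [if_pos hq, if_pos (by simp [hq])]; ring
        · rw [if_neg hq, if_neg (fun h => hq (Fin.ext (by simpa using h)))]; ring
      rw [Finset.sum_congr rfl (fun q _ => hsplit q), Finset.sum_add_distrib,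
        Finset.sum_ite_eq' Finset.univ (0 : Fin n) (fun _ => α/n - 1/n),
        Finset.sum_const, Finset.card_univ, Fintype.card_fin, nsmul_eq_mul,
        if_pos (Finset.mem_univ _)]
      field_simp
      ring
    have hcuniv : c Finset.univ = α + ((n:ℝ) - 1) := by
      rw [← partition_sum' hApart hadd,
        ← Finset.sum_erase_add _ _ (Finset.mem_univ (0 : Fin n)), hcA0,
        Finset.sum_congr rfl (fun j hj => hcAj j (Finset.ne_of_mem_erase hj)),
        Finset.sum_const, Finset.card_erase_of_mem (Finset.mem_univ _),
        Finset.card_univ, Fintype.card_fin, nsmul_eq_mul, mul_one,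
        Nat.cast_sub (by omega), Nat.cast_one]
      ring
    have hsupT : (⨆ j, c (T j)) = (α + ((n:ℝ) - 1)) / n := by
      rw [show (fun j => c (T j)) = fun _ : Fin n => (α + ((n:ℝ) - 1)) / n from
        funext hcTval]
      exact ciSup_const
    have hMMS : MMS c n Finset.univ = (α + ((n:ℝ) - 1)) / n := by
      apply le_antisymm
      · have := mms_le' hn0 hadd.1 hTpart
        rwa [hsupT] at this
      · have := mms_ge' hn0 hadd Finset.univ
        rwa [hcuniv] at this
    refine ⟨n*n, fun _ => c, A, fun _ => hadd, hApart, ?_, 0, ?_⟩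
    · intro i j
      show c (A i) ≤ α * c (A j)
      by_cases hi : i = 0 <;> by_cases hj : j = 0
      · rw [hi, hj, hcA0]; nlinarith
      · rw [hi, hcA0, hcAj j hj]; nlinarith
      · rw [hj, hcAj i hi, hcA0]; nlinarith
      · rw [hcAj i hi, hcAj j hj]; nlinarith
    · show c (A 0) = (n:ℝ) * α / ((n:ℝ) - 1 + α) * MMS c n Finset.univ
      rw [hcA0, hMMS]
      have hd : ((n:ℝ) - 1 + α) ≠ 0 := by intro h; nlinarith
      field_simp
      ring
end

section
/- Assume all agents have additive cost functions and let α ≥ 1. Every α-EF allocation is (2α/(α+1))-PMMS. Moreover this bound is tight: for every n ≥ 2 and α ≥ 1 there exists an n-agent instance with additive cost functions, an α-EF allocation A, an agent i and an agent j ≠ i with c_i(A_i) = (2α/(α+1))·MMS_i(2, A_i ∪ A_j). -/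
open Finset

/-!
With additive costs, `MMS_i(2, A_i ∪ A_j) ≥ (c_i(A_i) + c_i(A_j)) / 2`, and α-envy-freeness
gives `c_i(A_j) ≥ c_i(A_i) / α`; combining the two yields `c_i(A_i) ≤ 2α/(α+1) · MMS`.
For tightness, all agents share the additive cost with item weights `α + 1, α - 1, 2, …, 2`:
agent `0` receives the first two chores (cost `2α`), every other agent one chore of weight `2`.
The chores of agents `0` and `1` split as `{α + 1} | {α - 1, 2}`, so their maximin share is `α + 1`.
-/

section MaximinShare

variable {E : Type*} [DecidableEq E] {c : Finset E → ℝ} {k : ℕ}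

lemma isPartitionOf_ite (j₀ : Fin k) (S : Finset E) :
    IsPartitionOf (fun j => if j = j₀ then S else ∅) S := by
  refine ⟨fun i j hij => ?_, ?_⟩
  · by_cases hi : i = j₀
    · simp [hi, Ne.symm (hi ▸ hij)]
    · simp [hi]
  · ext e
    simp only [mem_biUnion, mem_univ, true_and]
    exact ⟨fun ⟨j, hj⟩ => by split_ifs at hj <;> simp_all, fun he => ⟨j₀, by simpa⟩⟩

lemma isPartitionOf_pair {U V : Finset E} (h : Disjoint U V) : IsPartitionOf ![U, V] (U ∪ V) := by
  refine ⟨fun i j hij => ?_, ?_⟩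
  · fin_cases i <;> fin_cases j <;> simp_all [h.symm]
  · ext e
    simp [Fin.exists_fin_two]

lemma MMS_nonneg (hc : ∀ S, 0 ≤ c S) (S : Finset E) : 0 ≤ MMS c k S :=
  Real.sInf_nonneg <| by
    rintro _ ⟨T, -, rfl⟩
    exact Real.iSup_nonneg fun j => hc (T j)

lemma MMS_le_iSup (hc : ∀ S, 0 ≤ c S) {S : Finset E} {T : Fin k → Finset E}
    (hT : IsPartitionOf T S) : MMS c k S ≤ ⨆ j, c (T j) :=
  csInf_le ⟨0, by rintro _ ⟨T, -, rfl⟩; exact Real.iSup_nonneg fun j => hc (T j)⟩ ⟨T, hT, rfl⟩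

lemma MMS_two_union_le (hc : ∀ S, 0 ≤ c S) {U V : Finset E} (h : Disjoint U V) :
    MMS c 2 (U ∪ V) ≤ max (c U) (c V) := by
  refine (MMS_le_iSup hc (isPartitionOf_pair h)).trans (ciSup_le fun j => ?_)
  fin_cases j
  · exact le_max_left _ _
  · exact le_max_right _ _

lemma AdditiveCost.sum_nonneg {w : E → ℝ} (hw : ∀ e, 0 ≤ w e) :
    AdditiveCost fun S => ∑ e ∈ S, w e :=
  ⟨fun _ => Finset.sum_nonneg fun e _ => hw e, fun S => by simp⟩

lemma AdditiveCost.union (hc : AdditiveCost c) {U V : Finset E} (h : Disjoint U V) :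
    c (U ∪ V) = c U + c V := by
  rw [hc.2 (U ∪ V), hc.2 U, hc.2 V, sum_union h]

lemma AdditiveCost.biUnion (hc : AdditiveCost c) {T : Fin k → Finset E}
    (hT : ∀ i j, i ≠ j → Disjoint (T i) (T j)) : c (univ.biUnion T) = ∑ j, c (T j) := by
  rw [hc.2, sum_biUnion fun i _ j _ hij => hT i j hij]
  exact sum_congr rfl fun j _ => (hc.2 (T j)).symm

lemma AdditiveCost.div_le_MMS (hc : AdditiveCost c) (k : ℕ) (S : Finset E) :
    c S / k ≤ MMS c k S := by
  rcases k.eq_zero_or_pos with rfl | hk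
  · simpa using MMS_nonneg hc.1 S
  refine le_csInf ⟨_, _, isPartitionOf_ite ⟨0, hk⟩ S, rfl⟩ ?_
  rintro _ ⟨T, hT, rfl⟩
  have : Nonempty (Fin k) := ⟨⟨0, hk⟩⟩
  rw [div_le_iff₀ (by exact_mod_cast hk), ← hT.2, hc.biUnion hT.1]
  calc ∑ j, c (T j) ≤ ∑ _ : Fin k, ⨆ j, c (T j) :=
        sum_le_sum fun j _ => le_ciSup (Finite.bddAbove_range fun j => c (T j)) j
    _ = (⨆ j, c (T j)) * k := by simp [mul_comm]

end MaximinShare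

theorem IsEF.isPMMS {E : Type*} [DecidableEq E] [Fintype E] {n : ℕ} {α : ℝ} (hα : 0 ≤ α)
    {c : Fin n → Finset E → ℝ} (hc : ∀ i, AdditiveCost (c i)) {A : Fin n → Finset E}
    (hA : IsAllocation A) (hEF : IsEF α c A) : IsPMMS (2 * α / (α + 1)) c A := by
  intro i j hij
  have hMMS : (c i (A i) + c i (A j)) / 2 ≤ MMS (c i) 2 (A i ∪ A j) := by
    simpa [(hc i).union (hA.1 i j hij)] using (hc i).div_le_MMS 2 (A i ∪ A j)
  rw [div_mul_eq_mul_div, le_div_iff₀ (by linarith)]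
  nlinarith [hEF i j]

lemma Fin.succ_ne_one_of_ne_zero {n : ℕ} {k : Fin (n + 2)} (hk : k ≠ 0) : k.succ ≠ 1 :=
  fun h => hk (Fin.succ_injective _ (h.trans Fin.succ_zero_eq_one.symm))

section TightInstance

variable (n : ℕ) (α : ℝ)

noncomputable def tightWeight (e : Fin (n + 3)) : ℝ :=
  if e = 0 then α + 1 else if e = 1 then α - 1 else 2

noncomputable def tightCost (S : Finset (Fin (n + 3))) : ℝ :=
  ∑ e ∈ S, tightWeight n α e

def tightAllocation (k : Fin (n + 2)) : Finset (Fin (n + 3)) :=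
  if k = 0 then {0, 1} else {k.succ}

variable {n α}

lemma additiveCost_tightCost (hα : 1 ≤ α) : AdditiveCost (tightCost n α) :=
  AdditiveCost.sum_nonneg fun e => by unfold tightWeight; split_ifs <;> linarith

lemma tightCost_tightAllocation (k : Fin (n + 2)) :
    tightCost n α (tightAllocation n k) = if k = 0 then 2 * α else 2 := by
  unfold tightCost tightAllocation
  split_ifs with hk
  · rw [sum_pair zero_ne_one]
    simp [tightWeight]
    ring
  · simp [tightWeight, Fin.succ_ne_zero, Fin.succ_ne_one_of_ne_zero hk]

lemma isAllocation_tightAllocation : IsAllocation (tightAllocation n) := by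
  refine ⟨fun i j hij => ?_, ?_⟩
  · unfold tightAllocation
    split_ifs with hi hj hj
    · exact absurd (hi.trans hj.symm) hij
    · simp [Fin.succ_ne_zero, Fin.succ_ne_one_of_ne_zero hj]
    · simp [Fin.succ_ne_zero, Fin.succ_ne_one_of_ne_zero hi]
    · simpa using hij
  · ext e
    simp only [mem_biUnion, mem_univ, true_and, iff_true]
    refine Fin.cases ⟨0, by simp [tightAllocation]⟩ (fun k => ?_) e
    by_cases hk : k = 0
    · exact ⟨0, by simp [tightAllocation, hk, Fin.succ_zero_eq_one]⟩
    · exact ⟨k, by simp [tightAllocation, hk]⟩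

lemma isEF_tightAllocation (hα : 1 ≤ α) :
    IsEF α (fun _ => tightCost n α) (tightAllocation n) := by
  intro i j
  simp only [tightCost_tightAllocation]
  split_ifs <;> nlinarith

lemma MMS_tightCost_tightAllocation (hα : 1 ≤ α) :
    MMS (tightCost n α) 2 (tightAllocation n 0 ∪ tightAllocation n 1) = α + 1 := by
  have h2 : 2 % (n + 3) = 2 := Nat.mod_eq_of_lt (by omega)
  have h02 : (0 : Fin (n + 3)) ≠ 2 := by simp [Fin.ext_iff, h2]
  have h12 : (1 : Fin (n + 3)) ≠ 2 := by simp [Fin.ext_iff, h2]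
  have hS : tightAllocation n 0 ∪ tightAllocation n 1 = {0} ∪ {1, 2} := by
    ext e
    simp [tightAllocation, Fin.succ_one_eq_two, or_left_comm]
  have hdisj : Disjoint ({0} : Finset (Fin (n + 3))) {1, 2} := by simp [h02]
  have hcost₀ : tightCost n α {0} = α + 1 := by simp [tightCost, tightWeight]
  have hcost₁₂ : tightCost n α {1, 2} = α + 1 := by
    simp [tightCost, tightWeight, sum_pair h12, h02.symm, h12.symm]
    ring
  have hc : AdditiveCost (tightCost n α) := additiveCost_tightCost hα
  apply le_antisymm
  · calc _ ≤ max (tightCost n α {0}) (tightCost n α {1, 2}) :=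
          hS ▸ MMS_two_union_le hc.1 hdisj
      _ = α + 1 := by rw [hcost₀, hcost₁₂, max_self]
  · calc α + 1 = tightCost n α ({0} ∪ {1, 2}) / 2 := by
          rw [hc.union hdisj, hcost₀, hcost₁₂]
          ring
      _ ≤ _ := hS ▸ hc.div_le_MMS 2 _

end TightInstance

/-- Proposition 4.2: with additive cost functions, every `α`-EF allocation is
`2α/(α+1)`-PMMS, and this bound is tight. -/
theorem alphaEF_is_PMMS_and_tight :
    (∀ (E : Type) [DecidableEq E] [Fintype E] (n : ℕ), 2 ≤ n → ∀ α : ℝ, 1 ≤ α →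
      ∀ c : Fin n → Finset E → ℝ, (∀ i, AdditiveCost (c i)) →
      ∀ A : Fin n → Finset E, IsAllocation A → IsEF α c A →
        IsPMMS (2 * α / (α + 1)) c A) ∧
    (∀ n : ℕ, 2 ≤ n → ∀ α : ℝ, 1 ≤ α →
      ∃ (m : ℕ) (c : Fin n → Finset (Fin m) → ℝ) (A : Fin n → Finset (Fin m)),
        (∀ i, AdditiveCost (c i)) ∧ IsAllocation A ∧ IsEF α c A ∧
        ∃ i j, i ≠ j ∧
          c i (A i) = (2 * α / (α + 1)) * MMS (c i) 2 (A i ∪ A j)) := by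
  refine ⟨fun E _ _ n _ α hα c hc A hA hEF => hEF.isPMMS (by linarith) hc hA, ?_⟩
  intro n hn α hα
  obtain ⟨n, rfl⟩ := Nat.exists_eq_add_of_le' hn
  refine ⟨n + 3, fun _ => tightCost n α, tightAllocation n, fun _ => additiveCost_tightCost hα,
    isAllocation_tightAllocation, isEF_tightAllocation hα, 0, 1, zero_ne_one, ?_⟩
  change tightCost n α _ = _ * MMS (tightCost n α) 2 _
  rw [MMS_tightCost_tightAllocation hα, tightCost_tightAllocation, if_pos rfl,
    div_mul_cancel₀ _ (by linarith)]
end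

section
/- For every n ≥ 2, every β ≥ 1, and every α with 1 < α ≤ 2, there exists an n-agent instance with additive cost functions and an α-PMMS allocation that is not β-EF1. -/
open Finset

/-- Proposition 5.2: for every `n ≥ 2`, `β ≥ 1` and `1 < α ≤ 2`, there is an additive
instance with an `α`-PMMS allocation that is not `β`-EF1. -/
theorem alphaPMMS_not_betaEF1 (n : ℕ) (hn : 2 ≤ n) (β : ℝ) (hβ : 1 ≤ β)
    (α : ℝ) (hα1 : 1 < α) (hα2 : α ≤ 2) :
    ∃ (m : ℕ) (c : Fin n → Finset (Fin m) → ℝ) (A : Fin n → Finset (Fin m)),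
      (∀ i, AdditiveCost (c i)) ∧ IsAllocation A ∧ IsPMMS α c A ∧ ¬ IsEF1 β c A := by
  classical
  have hα0 : (0:ℝ) < α := by linarith
  set i0 : Fin n := ⟨0, by omega⟩ with hi0
  set i1 : Fin n := ⟨1, by omega⟩ with hi1
  have hne : i0 ≠ i1 := by simp [hi0, hi1, Fin.ext_iff]
  set w : Fin 2 → ℝ := fun e => if e = 0 then 1 else α - 1 with hw
  have hwpos : ∀ e, 0 < w e := by
    intro e; fin_cases e <;> simp [hw] <;> linarith
  set c : Fin n → Finset (Fin 2) → ℝ := fun _ S => ∑ e ∈ S, w e with hc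
  set A : Fin n → Finset (Fin 2) := fun i => if i = i0 then Finset.univ else ∅ with hA
  -- a lower bound for MMS of the whole universe
  have hMMS_lb : (1:ℝ) ≤ MMS (c i0) 2 Finset.univ := by
    apply le_csInf
    · refine ⟨⨆ j : Fin 2, c i0 ((fun j : Fin 2 => if j = 0 then Finset.univ else ∅) j),
        (fun j : Fin 2 => if j = 0 then Finset.univ else ∅), ⟨?_, ?_⟩, rfl⟩
      · intro i j hij
        by_cases h : i = 0 <;> by_cases h' : j = 0 <;>
          simp_all [Finset.disjoint_empty_left, Finset.disjoint_empty_right]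
      · apply Finset.Subset.antisymm (Finset.subset_univ _)
        intro e _
        exact Finset.mem_biUnion.mpr ⟨0, Finset.mem_univ _, by simp⟩
    · rintro b ⟨T, ⟨-, hcover⟩, rfl⟩
      have h0 : (0 : Fin 2) ∈ Finset.univ.biUnion T := by
        rw [hcover]; exact Finset.mem_univ _
      obtain ⟨k, -, hk⟩ := Finset.mem_biUnion.mp h0
      have h1 : (1:ℝ) ≤ c i0 (T k) := by
        have := Finset.single_le_sum (f := w) (fun e _ => (hwpos e).le) hk
        simpa [hc, hw] using this
      have h2 : c i0 (T k) ≤ ⨆ j : Fin 2, c i0 (T j) :=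
        le_ciSup (f := fun j : Fin 2 => c i0 (T j))
          (Set.Finite.bddAbove (Set.finite_range _)) k
      linarith
  -- MMS is always nonnegative for our cost
  have hMMS_nonneg : ∀ S : Finset (Fin 2), ∀ i : Fin n, 0 ≤ MMS (c i) 2 S := by
    intro S i
    apply Real.sInf_nonneg
    rintro b ⟨T, -, rfl⟩
    have h0 : (0:ℝ) ≤ c i (T 0) :=
      Finset.sum_nonneg fun e _ => (hwpos e).le
    have h2 : c i (T 0) ≤ ⨆ j : Fin 2, c i (T j) :=
      le_ciSup (f := fun j : Fin 2 => c i (T j))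
        (Set.Finite.bddAbove (Set.finite_range _)) 0
    linarith
  refine ⟨2, c, A, ?_, ?_, ?_, ?_⟩
  · -- additive
    intro i
    refine ⟨fun S => Finset.sum_nonneg fun e _ => (hwpos e).le, fun S => ?_⟩
    simp [hc, Finset.sum_singleton]
  · -- allocation
    constructor
    · intro i j hij
      by_cases h : i = i0 <;> by_cases h' : j = i0
      · exact absurd (h.trans h'.symm) hij
      · simp [hA, h']
      · simp [hA, h]
      · simp [hA, h']
    · apply Finset.Subset.antisymm (Finset.subset_univ _)
      intro e _
      exact Finset.mem_biUnion.mpr ⟨i0, Finset.mem_univ _, by simp [hA]⟩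
  · -- α-PMMS
    intro i j hij
    by_cases hi : i = i0
    · subst hi
      have hAij : A i0 ∪ A j = Finset.univ := by
        simp [hA]
      have hcost : c i0 (A i0) = α := by
        simp [hc, hA, hw, Fin.sum_univ_two]
      rw [hAij, hcost]
      nlinarith [hMMS_lb]
    · have hAi : A i = ∅ := by simp [hA, hi]
      have hcost : c i (A i) = 0 := by simp [hc, hAi]
      rw [hcost]
      exact mul_nonneg hα0.le (hMMS_nonneg _ i)
  · -- not β-EF1
    intro h
    rcases h i0 i1 hne with h0 | ⟨e, he, hle⟩
    · have : (0 : Fin 2) ∈ A i0 := by simp [hA]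
      rw [h0] at this
      exact absurd this (Finset.notMem_empty _)
    · have hA1 : A i1 = ∅ := by simp [hA, hne.symm]
      have hrhs : c i0 (A i1) = 0 := by simp [hc, hA1]
      have hAi0 : A i0 = Finset.univ := by simp [hA]
      have hne' : (Finset.univ \ {e} : Finset (Fin 2)).Nonempty :=
        ⟨e + 1, by fin_cases e <;> decide⟩
      have hpos : 0 < c i0 (A i0 \ {e}) := by
        rw [hAi0]
        exact Finset.sum_pos (fun e' _ => hwpos e') hne'
      rw [hrhs] at hle
      simp at hle
      linarith
end
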